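/- arXiv:1403.2037 — 15 statements merged into one kernel-verified Lean document; each statement's English description precedes it below -/
import Mathlib

section
/- Let E be a real Banach space, P ⊆ E a cone with nonempty interior, and D a cone metric on a nonempty set X. Define d(x,y) = inf{‖u‖ : u ∈ E, D(x,y) ≤ u}. Then d is a metric on X: d(x,y) ≥ 0 with d(x,y) = 0 if and only if x = y, d(x,y) = d(y,x), and d(x,y) ≤ d(x,z) + d(z,y) for all x, y, z ∈ X. -/
/-- `P` is a cone in the real Banach space `E`. -/
def IsCone {E : Type*} [NormedAddCommGroup E] [NormedSpace ℝ E] (P : Set E) : Prop :=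
  IsClosed P ∧ P.Nonempty ∧ P ≠ {0} ∧
  (∀ a b : ℝ, 0 ≤ a → 0 ≤ b → ∀ x ∈ P, ∀ y ∈ P, a • x + b • y ∈ P) ∧
  (∀ x ∈ P, -x ∈ P → x = 0)

/-- The partial order induced by the cone `P`: `x ≤ y` iff `y - x ∈ P`. -/
def coneLE {E : Type*} [NormedAddCommGroup E] [NormedSpace ℝ E] (P : Set E) (x y : E) : Prop :=
  y - x ∈ P

/-- `D : X → X → E` is a cone metric with respect to the cone `P`. -/
def IsConeMetric {E X : Type*} [NormedAddCommGroup E] [NormedSpace ℝ E]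
    (P : Set E) (D : X → X → E) : Prop :=
  (∀ x y, coneLE P 0 (D x y)) ∧
  (∀ x y : X, D x y = 0 ↔ x = y) ∧
  (∀ x y, D x y = D y x) ∧
  (∀ x y z, coneLE P (D x y) (D x z + D z y))

/-- The equivalent (real-valued) metric of the cone metric `D`:
`d(x,y) = inf {‖u‖ : D x y ≤ u}`. -/
noncomputable def eqMetric {E X : Type*} [NormedAddCommGroup E] [NormedSpace ℝ E]
    (P : Set E) (D : X → X → E) (x y : X) : ℝ :=
  sInf {r : ℝ | ∃ u : E, coneLE P (D x y) u ∧ ‖u‖ = r}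

theorem stmt1 {E X : Type*} [NormedAddCommGroup E] [NormedSpace ℝ E] [CompleteSpace E]
    [Nonempty X] (P : Set E) (hP : IsCone P) (hPint : (interior P).Nonempty)
    (D : X → X → E) (hD : IsConeMetric P D) :
    (∀ x y : X, 0 ≤ eqMetric P D x y) ∧
    (∀ x y : X, eqMetric P D x y = 0 ↔ x = y) ∧
    (∀ x y : X, eqMetric P D x y = eqMetric P D y x) ∧
    (∀ x y z : X, eqMetric P D x y ≤ eqMetric P D x z + eqMetric P D z y) := by
  obtain ⟨hclosed, hne, -, hconv, hpoint⟩ := hP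
  obtain ⟨hpos, heq, hsymm, htri⟩ := hD
  have h0 : (0 : E) ∈ P := by
    obtain ⟨w, hw⟩ := hne
    have := hconv 0 0 le_rfl le_rfl w hw w hw
    simpa using this
  have hadd : ∀ x ∈ P, ∀ y ∈ P, x + y ∈ P := by
    intro x hx y hy
    have := hconv 1 1 zero_le_one zero_le_one x hx y hy
    simpa using this
  -- properties of sets
  have hmem : ∀ x y : X, ‖D x y‖ ∈ {r : ℝ | ∃ u : E, coneLE P (D x y) u ∧ ‖u‖ = r} := by
    intro x y
    exact ⟨D x y, by simpa [coneLE] using h0, rfl⟩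
  have hbdd : ∀ x y : X, BddBelow {r : ℝ | ∃ u : E, coneLE P (D x y) u ∧ ‖u‖ = r} := by
    intro x y
    exact ⟨0, fun r ⟨u, _, hu⟩ => hu ▸ norm_nonneg u⟩
  have hnonneg : ∀ x y : X, 0 ≤ eqMetric P D x y := by
    intro x y
    exact le_csInf ⟨_, hmem x y⟩ (fun r ⟨u, _, hu⟩ => hu ▸ norm_nonneg u)
  refine ⟨hnonneg, ?_, ?_, ?_⟩
  · intro x y
    constructor
    · intro h
      -- extract u_n with norm → 0
      have hconv0 : ∀ ε > 0, ∃ u : E, coneLE P (D x y) u ∧ ‖u‖ < ε := by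
        intro ε hε
        have : sInf {r : ℝ | ∃ u : E, coneLE P (D x y) u ∧ ‖u‖ = r} < ε := by
          show eqMetric P D x y < ε
          rw [h]; exact hε
        obtain ⟨r, ⟨u, hu, hur⟩, hr⟩ := exists_lt_of_csInf_lt ⟨_, hmem x y⟩ this
        exact ⟨u, hu, hur ▸ hr⟩
      -- construct sequence
      choose u hu hun using fun n : ℕ => hconv0 (1 / (n + 1)) (by positivity)
      have hlim : Filter.Tendsto u Filter.atTop (nhds 0) := by
        rw [tendsto_zero_iff_norm_tendsto_zero]
        refine squeeze_zero (fun n => norm_nonneg _) (fun n => le_of_lt (hun n)) ?_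
        exact tendsto_one_div_add_atTop_nhds_zero_nat
      have hlim2 : Filter.Tendsto (fun n => u n - D x y) Filter.atTop (nhds (0 - D x y)) :=
        hlim.sub tendsto_const_nhds
      have hmemP : -D x y ∈ P := by
        have := hclosed.mem_of_tendsto hlim2 (Filter.Eventually.of_forall fun n => hu n)
        simpa using this
      have : D x y = 0 := hpoint _ (by simpa [coneLE] using hpos x y) hmemP
      exact (heq x y).mp this
    · intro h
      subst h
      have hD0 : D x x = 0 := (heq x x).mpr rfl
      have h0mem : (0:ℝ) ∈ {r : ℝ | ∃ u : E, coneLE P (D x x) u ∧ ‖u‖ = r} :=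
        ⟨0, by simpa [coneLE, hD0] using h0, norm_zero⟩
      exact le_antisymm (csInf_le (hbdd x x) h0mem) (hnonneg x x)
  · intro x y
    unfold eqMetric
    rw [hsymm x y]
  · intro x y z
    have key : ∀ a ∈ {r : ℝ | ∃ u : E, coneLE P (D x z) u ∧ ‖u‖ = r},
        ∀ b ∈ {r : ℝ | ∃ v : E, coneLE P (D z y) v ∧ ‖v‖ = r},
        eqMetric P D x y ≤ a + b := by
      rintro a ⟨u, hu, rfl⟩ b ⟨v, hv, rfl⟩
      have hsum : coneLE P (D x y) (u + v) := by
        have h1 : (u - D x z) + (v - D z y) ∈ P := hadd _ hu _ hv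
        have h2 : (D x z + D z y - D x y) ∈ P := htri x y z
        have h3 := hadd _ h1 _ h2
        have : (u - D x z) + (v - D z y) + (D x z + D z y - D x y) = u + v - D x y := by
          abel
        rwa [this] at h3
      calc eqMetric P D x y ≤ ‖u + v‖ := csInf_le (hbdd x y) ⟨u + v, hsum, rfl⟩
        _ ≤ ‖u‖ + ‖v‖ := norm_add_le u v
    have h1 : eqMetric P D x y - eqMetric P D z y ≤ eqMetric P D x z := by
      apply le_csInf ⟨_, hmem x z⟩
      intro a ha
      rw [sub_le_iff_le_add]
      have : eqMetric P D x y - a ≤ eqMetric P D z y := by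
        apply le_csInf ⟨_, hmem z y⟩
        intro b hb
        linarith [key a ha b hb]
      linarith
    linarith
end

section
/- Let E be a real Banach space, P ⊆ E a cone with nonempty interior, D a cone metric on a nonempty set X, and d(x,y) = inf{‖u‖ : u ∈ E, D(x,y) ≤ u} its equivalent metric. For any sequence (x_n) in X and x ∈ X, d(x_n, x) → 0 as n → ∞ if and only if for every c ∈ E with c in the interior of P there exists N such that for all n ≥ N, c − D(x_n, x) lies in the interior of P (i.e., x_n → x in the cone metric D). -/
/-!
A point `c` of the interior of `P` has a ball of some radius `ε` inside the interior, and
interior points stay interior after adding elements of `P`. So `D(xₙ, a) ≤ u` with `‖u‖ < ε`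
gives `c - D(xₙ, a) = (c - u) + (u - D(xₙ, a)) ≫ 0`; this is the forward direction. Conversely,
scaling a fixed interior point yields interior points `c` of arbitrarily small norm, and
`D(xₙ, a) ≪ c` bounds `d(xₙ, a)` by `‖c‖`.
-/

open Filter Topology

section Cone

variable {E : Type*} [NormedAddCommGroup E] [NormedSpace ℝ E] {P : Set E}

namespace IsCone

theorem zero_mem (hP : IsCone P) : (0 : E) ∈ P := by
  obtain ⟨p, hp⟩ := hP.2.1
  simpa using hP.2.2.2.1 0 0 le_rfl le_rfl p hp p hp

theorem add_mem (hP : IsCone P) {u v : E} (hu : u ∈ P) (hv : v ∈ P) : u + v ∈ P := by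
  simpa using hP.2.2.2.1 1 1 zero_le_one zero_le_one u hu v hv

theorem smul_mem (hP : IsCone P) {t : ℝ} (ht : 0 ≤ t) {u : E} (hu : u ∈ P) : t • u ∈ P := by
  simpa using hP.2.2.2.1 t 0 ht le_rfl u hu u hu

theorem add_mem_interior (hP : IsCone P) {c p : E} (hc : c ∈ interior P) (hp : p ∈ P) :
    c + p ∈ interior P := by
  refine interior_maximal ?_ ((isOpenMap_add_right p) _ isOpen_interior) ⟨c, hc, rfl⟩
  rintro _ ⟨w, hw, rfl⟩
  exact hP.add_mem (interior_subset hw) hp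

theorem smul_mem_interior (hP : IsCone P) {t : ℝ} (ht : 0 < t) {c : E} (hc : c ∈ interior P) :
    t • c ∈ interior P := by
  refine interior_maximal ?_ ((isOpenMap_smul₀ ht.ne') _ isOpen_interior) ⟨c, hc, rfl⟩
  rintro _ ⟨w, hw, rfl⟩
  exact hP.smul_mem ht.le (interior_subset hw)

theorem exists_mem_interior_norm_lt (hP : IsCone P) (hPint : (interior P).Nonempty)
    {ε : ℝ} (hε : 0 < ε) : ∃ c ∈ interior P, ‖c‖ < ε := by
  obtain ⟨c₀, hc₀⟩ := hPint
  have hpos : 0 < ‖c₀‖ + 1 := by positivity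
  refine ⟨(ε / (‖c₀‖ + 1)) • c₀, hP.smul_mem_interior (by positivity) hc₀, ?_⟩
  rw [norm_smul, Real.norm_of_nonneg (by positivity), div_mul_eq_mul_div,
    div_lt_iff₀ hpos]
  nlinarith

theorem exists_forall_sub_mem_interior (hP : IsCone P) {c : E} (hc : c ∈ interior P) :
    ∃ ε > 0, ∀ {y u : E}, coneLE P y u → ‖u‖ < ε → c - y ∈ interior P := by
  obtain ⟨ε, hε, hball⟩ := Metric.isOpen_iff.mp isOpen_interior c hc
  refine ⟨ε, hε, fun {y u} hyu hu => ?_⟩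
  have hcu : c - u ∈ interior P := hball (by simpa [dist_eq_norm] using hu)
  simpa using hP.add_mem_interior hcu hyu

end IsCone

end Cone

section EqMetric

variable {E X : Type*} [NormedAddCommGroup E] [NormedSpace ℝ E] {P : Set E} {D : X → X → E}

theorem eqMetric_nonneg (x y : X) : 0 ≤ eqMetric P D x y :=
  Real.sInf_nonneg fun _ ⟨u, _, hu⟩ => hu ▸ norm_nonneg u

theorem eqMetric_le_norm {x y : X} {u : E} (hu : coneLE P (D x y) u) :
    eqMetric P D x y ≤ ‖u‖ :=
  csInf_le ⟨0, fun _ ⟨v, _, hv⟩ => hv ▸ norm_nonneg v⟩ ⟨u, hu, rfl⟩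

theorem exists_coneLE_norm_lt_of_eqMetric_lt (hP : IsCone P) {x y : X} {ε : ℝ}
    (h : eqMetric P D x y < ε) : ∃ u, coneLE P (D x y) u ∧ ‖u‖ < ε := by
  have hne : {r : ℝ | ∃ u : E, coneLE P (D x y) u ∧ ‖u‖ = r}.Nonempty :=
    ⟨_, D x y, by simpa [coneLE] using hP.zero_mem, rfl⟩
  obtain ⟨_, ⟨u, hu, rfl⟩, hlt⟩ := exists_lt_of_csInf_lt hne h
  exact ⟨u, hu, hlt⟩

theorem tendsto_eqMetric_nhds_zero_iff (hP : IsCone P) (hPint : (interior P).Nonempty)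
    {ι : Type*} {l : Filter ι} (x : ι → X) (a : X) :
    Tendsto (fun n => eqMetric P D (x n) a) l (𝓝 0) ↔
      ∀ c ∈ interior P, ∀ᶠ n in l, c - D (x n) a ∈ interior P := by
  rw [tendsto_order]
  constructor
  · rintro ⟨-, h⟩ c hc
    obtain ⟨ε, hε, hsmall⟩ := hP.exists_forall_sub_mem_interior hc
    filter_upwards [h ε hε] with n hn
    obtain ⟨u, hu, hu_lt⟩ := exists_coneLE_norm_lt_of_eqMetric_lt hP hn
    exact hsmall hu hu_lt
  · intro h
    refine ⟨fun r hr => .of_forall fun n => hr.trans_le (eqMetric_nonneg _ _), fun ε hε => ?_⟩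
    obtain ⟨c, hc, hcε⟩ := hP.exists_mem_interior_norm_lt hPint hε
    filter_upwards [h c hc] with n hn
    exact (eqMetric_le_norm (interior_subset hn)).trans_lt hcε

end EqMetric

theorem stmt2_general {E X : Type*} [NormedAddCommGroup E] [NormedSpace ℝ E]
    (P : Set E) (hP : IsCone P) (hPint : (interior P).Nonempty)
    (D : X → X → E)
    (x : ℕ → X) (a : X) :
    Filter.Tendsto (fun n => eqMetric P D (x n) a) Filter.atTop (nhds 0) ↔
      ∀ c ∈ interior P, ∃ N : ℕ, ∀ n ≥ N, c - D (x n) a ∈ interior P := by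
  simpa only [eventually_atTop] using tendsto_eqMetric_nhds_zero_iff (D := D) (l := atTop) hP hPint x a

theorem stmt2 {E X : Type*} [NormedAddCommGroup E] [NormedSpace ℝ E] [CompleteSpace E]
    [Nonempty X] (P : Set E) (hP : IsCone P) (hPint : (interior P).Nonempty)
    (D : X → X → E) (hD : IsConeMetric P D)
    (x : ℕ → X) (a : X) :
    Filter.Tendsto (fun n => eqMetric P D (x n) a) Filter.atTop (nhds 0) ↔
      ∀ c ∈ interior P, ∃ N : ℕ, ∀ n ≥ N, c - D (x n) a ∈ interior P :=
  stmt2_general P hP hPint D x a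
end

section
/- Let E be a real Banach space, P ⊆ E a cone, D a cone metric on a nonempty set X with equivalent metric d(x,y) = inf{‖u‖ : u ∈ E, D(x,y) ≤ u}, T : X → X a self map, and φ : E → E a map with φ(P) ⊆ P that is bounded on P, i.e., ‖φ‖ := sup_{x ∈ P, x ≠ 0} ‖φ(x)‖/‖x‖ < ∞. Define ψ : [0,∞) → [0,∞) by ψ(t) = sup_{x ∈ P, x ≠ 0} ‖φ((t/‖x‖)·x)‖. If D(Tx,Ty) ≤ φ(D(x,y)) for all x, y ∈ X, then d(Tx,Ty) ≤ ψ(‖D(x,y)‖) for all x, y ∈ X. -/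
theorem stmt3 {E X : Type*} [NormedAddCommGroup E] [NormedSpace ℝ E] [CompleteSpace E]
    [Nonempty X] (P : Set E) (hP : IsCone P)
    (D : X → X → E) (hD : IsConeMetric P D) (T : X → X)
    (φ : E → E) (hφP : ∀ w ∈ P, φ w ∈ P)
    (hbdd : BddAbove {r : ℝ | ∃ w ∈ P, w ≠ 0 ∧ r = ‖φ w‖ / ‖w‖})
    (ψ : ℝ → ℝ)
    (hψ : ∀ t : ℝ, 0 ≤ t → ψ t = sSup {r : ℝ | ∃ w ∈ P, w ≠ 0 ∧ r = ‖φ ((t / ‖w‖) • w)‖})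
    (h : ∀ x y : X, coneLE P (D (T x) (T y)) (φ (D x y))) :
    ∀ x y : X, eqMetric P D (T x) (T y) ≤ ψ ‖D x y‖ := by
  obtain ⟨hclosed, hne, hne0, hsum, hpt⟩ := hP
  have h0P : (0 : E) ∈ P := by
    obtain ⟨x, hx⟩ := hne
    have := hsum 0 0 le_rfl le_rfl x hx x hx
    simpa using this
  have hexnz : ∃ w ∈ P, w ≠ 0 := by
    by_contra hcon
    push_neg at hcon
    apply hne0
    ext y
    simp only [Set.mem_singleton_iff]
    constructor
    · intro hy; exact hcon y hy
    · intro hy; subst hy; exact h0P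
  obtain ⟨M, hM⟩ := hbdd
  intro x y
  set w := D x y with hw
  have hwP : w ∈ P := by
    have := hD.1 x y
    simpa [coneLE] using this
  -- step 1 : eqMetric ≤ ‖φ w‖
  have step1 : eqMetric P D (T x) (T y) ≤ ‖φ w‖ := by
    apply csInf_le
    · exact ⟨0, fun r ⟨u, _, hu⟩ => hu ▸ norm_nonneg u⟩
    · exact ⟨φ w, h x y, rfl⟩
  -- step 2 : ‖φ w‖ ≤ ψ ‖w‖
  have step2 : ‖φ w‖ ≤ ψ ‖w‖ := by
    rw [hψ ‖w‖ (norm_nonneg w)]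
    by_cases hw0 : w = 0
    · -- the set is the singleton {‖φ 0‖}
      have hset : {r : ℝ | ∃ v ∈ P, v ≠ 0 ∧ r = ‖φ ((‖w‖ / ‖v‖) • v)‖} = {‖φ (0:E)‖} := by
        ext r
        simp only [Set.mem_setOf_eq, Set.mem_singleton_iff]
        constructor
        · rintro ⟨v, _, _, rfl⟩
          simp [hw0]
        · intro hr
          obtain ⟨v, hvP, hvnz⟩ := hexnz
          exact ⟨v, hvP, hvnz, by simp [hw0, hr]⟩
      rw [hset, csSup_singleton, hw0]
    · -- w itself is a witness with (‖w‖/‖w‖) • w = w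
      have hmem : ‖φ w‖ ∈ {r : ℝ | ∃ v ∈ P, v ≠ 0 ∧ r = ‖φ ((‖w‖ / ‖v‖) • v)‖} := by
        refine ⟨w, hwP, hw0, ?_⟩
        rw [div_self (norm_ne_zero_iff.mpr hw0), one_smul]
      apply le_csSup _ hmem
      -- bounded above by M * ‖w‖ (or ‖φ 0‖ can't occur since ‖w‖ > 0)
      refine ⟨max (M * ‖w‖) ‖φ (0:E)‖, ?_⟩
      rintro r ⟨v, hvP, hvnz, rfl⟩
      set u := (‖w‖ / ‖v‖) • v with hu
      have hnu : ‖u‖ = ‖w‖ := by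
        rw [hu, norm_smul, Real.norm_eq_abs, abs_of_nonneg
          (div_nonneg (norm_nonneg w) (norm_nonneg v)),
          div_mul_cancel₀ _ (norm_ne_zero_iff.mpr hvnz)]
      have huP : u ∈ P := by
        have := hsum (‖w‖ / ‖v‖) 0 (div_nonneg (norm_nonneg w) (norm_nonneg v)) le_rfl
          v hvP v hvP
        simpa [hu] using this
      have hunz : u ≠ 0 := by
        intro hc
        apply hw0
        rw [← norm_eq_zero, ← hnu, hc, norm_zero]
      have : ‖φ u‖ / ‖u‖ ≤ M := hM ⟨u, huP, hunz, rfl⟩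
      have hupos : 0 < ‖u‖ := norm_pos_iff.mpr hunz
      have : ‖φ u‖ ≤ M * ‖u‖ := by
        rw [div_le_iff₀ hupos] at this
        exact this
      exact le_max_of_le_left (by rwa [hnu] at this)
  exact step1.trans step2
end

section
/- Let E be a real Banach space, P ⊆ E a cone, D a cone metric on a nonempty set X with equivalent metric d(x,y) = inf{‖u‖ : u ∈ E, D(x,y) ≤ u}, T : X → X a self map, and φ : E → E a continuous linear map with φ(P) ⊆ P that is increasing with respect to the cone order (u ≤ v implies φ(u) ≤ φ(v)) and bounded on P with ‖φ‖_P := sup_{x ∈ P, x ≠ 0} ‖φ(x)‖/‖x‖ < ∞. If D(Tx,Ty) ≤ φ(D(x,y)) for all x, y ∈ X, then d(Tx,Ty) ≤ ‖φ‖_P · d(x,y) for all x, y ∈ X. -/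
theorem stmt5 {E X : Type*} [NormedAddCommGroup E] [NormedSpace ℝ E] [CompleteSpace E]
    [Nonempty X] (P : Set E) (hP : IsCone P)
    (D : X → X → E) (hD : IsConeMetric P D) (T : X → X)
    (φ : E →L[ℝ] E) (hφP : ∀ w ∈ P, φ w ∈ P)
    (hmono : ∀ u v : E, coneLE P u v → coneLE P (φ u) (φ v))
    (hbdd : BddAbove {r : ℝ | ∃ w ∈ P, w ≠ 0 ∧ r = ‖φ w‖ / ‖w‖})
    (h : ∀ x y : X, coneLE P (D (T x) (T y)) (φ (D x y))) :
    ∀ x y : X, eqMetric P D (T x) (T y) ≤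
      sSup {r : ℝ | ∃ w ∈ P, w ≠ 0 ∧ r = ‖φ w‖ / ‖w‖} * eqMetric P D x y := by
  intro x y
  obtain ⟨hclosed, hne, hne0, hadd, hpt⟩ := hP
  obtain ⟨h0, heq, hsym, htri⟩ := hD
  -- 0 ∈ P
  obtain ⟨w0, hw0⟩ := hne
  have hzero : (0 : E) ∈ P := by
    have := hadd 0 0 le_rfl le_rfl w0 hw0 w0 hw0
    simpa using this
  -- addition closed
  have haddP : ∀ u ∈ P, ∀ v ∈ P, u + v ∈ P := by
    intro u hu v hv
    have := hadd 1 1 zero_le_one zero_le_one u hu v hv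
    simpa using this
  -- transitivity
  have htrans : ∀ a b c : E, coneLE P a b → coneLE P b c → coneLE P a c := by
    intro a b c hab hbc
    have := haddP _ hab _ hbc
    simpa [coneLE, sub_add_sub_cancel'] using this
  set M := sSup {r : ℝ | ∃ w ∈ P, w ≠ 0 ∧ r = ‖φ w‖ / ‖w‖} with hM
  -- the ratio set is nonempty
  obtain ⟨wn, hwnP, hwn0⟩ : ∃ w ∈ P, w ≠ 0 := by
    by_contra hc
    push_neg at hc
    apply hne0
    ext z
    simp only [Set.mem_singleton_iff]
    exact ⟨fun hz => hc z hz, fun hz => hz ▸ hzero⟩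
  have hMle : ∀ w ∈ P, w ≠ 0 → ‖φ w‖ / ‖w‖ ≤ M :=
    fun w hw hw0 => le_csSup hbdd ⟨w, hw, hw0, rfl⟩
  have hM0 : 0 ≤ M :=
    le_trans (div_nonneg (norm_nonneg _) (norm_nonneg _)) (hMle wn hwnP hwn0)
  -- the set defining eqMetric x y
  set S := {r : ℝ | ∃ u : E, coneLE P (D x y) u ∧ ‖u‖ = r} with hS
  have hSne : S.Nonempty := ⟨‖D x y‖, D x y, by simpa [coneLE] using hzero, rfl⟩
  have hSbdd : BddBelow S := ⟨0, by rintro r ⟨u, -, rfl⟩; exact norm_nonneg _⟩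
  -- key claim: for each r ∈ S, eqMetric P D (T x) (T y) ≤ M * r
  have key : ∀ r ∈ S, eqMetric P D (T x) (T y) ≤ M * r := by
    rintro r ⟨u, hu, rfl⟩
    by_cases hu0 : u = 0
    · -- then D x y = 0, so x = y
      subst hu0
      have hd1 : -(D x y) ∈ P := by simpa [coneLE] using hu
      have hd2 : D x y ∈ P := by simpa [coneLE] using h0 x y
      have : D x y = 0 := hpt _ hd2 hd1
      have hxy : x = y := (heq x y).mp this
      subst hxy
      have h00 : (0:ℝ) ∈ {r : ℝ | ∃ v : E, coneLE P (D (T x) (T x)) v ∧ ‖v‖ = r} := by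
        refine ⟨0, ?_, norm_zero⟩
        have : D (T x) (T x) = 0 := (heq _ _).mpr rfl
        simpa [coneLE, this] using hzero
      have := csInf_le ⟨0, by rintro r ⟨v, -, rfl⟩; exact norm_nonneg _⟩ h00
      simpa [eqMetric] using this
    · -- u ∈ P
      have huP : u ∈ P := by
        have h1 : u - D x y ∈ P := hu
        have h2 : D x y ∈ P := by simpa [coneLE] using h0 x y
        have := haddP _ h1 _ h2
        simpa using this
      have hchain : coneLE P (D (T x) (T y)) (φ u) :=
        htrans _ _ _ (h x y) (hmono _ _ hu)
      have hmem : ‖φ u‖ ∈ {r : ℝ | ∃ v : E, coneLE P (D (T x) (T y)) v ∧ ‖v‖ = r} :=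
        ⟨φ u, hchain, rfl⟩
      have h1 : eqMetric P D (T x) (T y) ≤ ‖φ u‖ :=
        csInf_le ⟨0, by rintro r ⟨v, -, rfl⟩; exact norm_nonneg _⟩ hmem
      have h2 : ‖φ u‖ ≤ M * ‖u‖ := by
        have := hMle u huP hu0
        rw [div_le_iff₀ (norm_pos_iff.mpr hu0)] at this
        linarith
      linarith
  -- conclude
  rcases eq_or_lt_of_le hM0 with hM0' | hMpos
  · obtain ⟨r, hr⟩ := hSne
    have := key r hr
    have h2 : M * r = 0 := by rw [← hM0']; ring
    have h3 : M * eqMetric P D x y = 0 := by rw [← hM0']; ring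
    rw [h3]; rw [h2] at this; exact this
  · have hdiv : ∀ r ∈ S, eqMetric P D (T x) (T y) / M ≤ r := by
      intro r hr
      rw [div_le_iff₀ hMpos]
      calc eqMetric P D (T x) (T y) ≤ M * r := key r hr
        _ = r * M := mul_comm _ _
    have := le_csInf hSne hdiv
    rw [div_le_iff₀ hMpos] at this
    calc eqMetric P D (T x) (T y) ≤ sInf S * M := this
      _ = M * eqMetric P D x y := by rw [mul_comm]; rfl
end

section
/- Let E be a real Banach space, P ⊆ E a cone, D a cone metric on a nonempty set X with equivalent metric d(x,y) = inf{‖u‖ : u ∈ E, D(x,y) ≤ u}, T : X → X a map, and α ∈ [0,1). If D(Tx,Ty) ≤ α·D(x,y) for all x, y ∈ X, then d(Tx,Ty) ≤ α·d(x,y) for all x, y ∈ X. -/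
open Pointwise in
theorem stmt6 {E X : Type*} [NormedAddCommGroup E] [NormedSpace ℝ E] [CompleteSpace E]
    [Nonempty X] (P : Set E) (hP : IsCone P)
    (D : X → X → E) (hD : IsConeMetric P D) (T : X → X)
    (α : ℝ) (hα0 : 0 ≤ α) (hα1 : α < 1)
    (h : ∀ x y : X, coneLE P (D (T x) (T y)) (α • D x y)) :
    ∀ x y : X, eqMetric P D (T x) (T y) ≤ α * eqMetric P D x y := by

  intro x y
  obtain ⟨hclosed, ⟨p0, hp0⟩, hne, hcone, hpt⟩ := hP
  have h0P : (0 : E) ∈ P := by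
    have := hcone 0 0 le_rfl le_rfl p0 hp0 p0 hp0
    simpa using this
  -- S and S' sets
  set S := {r : ℝ | ∃ u : E, coneLE P (D x y) u ∧ ‖u‖ = r} with hS
  set S' := {r : ℝ | ∃ u : E, coneLE P (D (T x) (T y)) u ∧ ‖u‖ = r} with hS'
  have hSne : S.Nonempty := ⟨‖D x y‖, D x y, by simpa [coneLE] using h0P, rfl⟩
  have hS'bdd : BddBelow S' := ⟨0, by rintro r ⟨u, _, rfl⟩; exact norm_nonneg u⟩
  have hsub : α • S ⊆ S' := by
    rintro r ⟨r', ⟨u, hu, rfl⟩, rfl⟩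
    refine ⟨α • u, ?_, by simp [norm_smul, abs_of_nonneg hα0]⟩
    have h1 : α • u - α • D x y ∈ P := by
      have := hcone α 0 hα0 le_rfl _ hu p0 hp0
      simpa [smul_sub] using this
    have h2 : α • D x y - D (T x) (T y) ∈ P := h x y
    have := hcone 1 1 zero_le_one zero_le_one _ h1 _ h2
    simpa [coneLE] using this
  have hαSne : (α • S).Nonempty := hSne.smul_set
  have h1 : sInf S' ≤ sInf (α • S) := csInf_le_csInf hS'bdd hαSne hsub
  have h2 : sInf (α • S) = α * sInf S := by
    rw [Real.sInf_smul_of_nonneg hα0]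
    simp [smul_eq_mul]
  calc eqMetric P D (T x) (T y) = sInf S' := rfl
    _ ≤ sInf (α • S) := h1
    _ = α * sInf S := h2
    _ = α * eqMetric P D x y := rfl
end

section
/- Let E be a real Banach space, P ⊆ E a cone, D a cone metric on a nonempty set X with equivalent metric d(x,y) = inf{‖u‖ : u ∈ E, D(x,y) ≤ u}, T : X → X a map, and λ ∈ [0,1/2). If D(Tx,Ty) ≤ λ·(D(Tx,x) + D(Ty,y)) for all x, y ∈ X, then d(Tx,Ty) ≤ λ·(d(Tx,x) + d(Ty,y)) for all x, y ∈ X. -/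
theorem stmt7 {E X : Type*} [NormedAddCommGroup E] [NormedSpace ℝ E] [CompleteSpace E]
    [Nonempty X] (P : Set E) (hP : IsCone P)
    (D : X → X → E) (hD : IsConeMetric P D) (T : X → X)
    (lam : ℝ) (hl0 : 0 ≤ lam) (hl1 : lam < 1 / 2)
    (h : ∀ x y : X, coneLE P (D (T x) (T y)) (lam • (D (T x) x + D (T y) y))) :
    ∀ x y : X, eqMetric P D (T x) (T y) ≤
      lam * (eqMetric P D (T x) x + eqMetric P D (T y) y) := by
  obtain ⟨-, ⟨z0, hz0⟩, -, hadd, -⟩ := hP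
  have h0P : (0 : E) ∈ P := by
    have := hadd 0 0 le_rfl le_rfl z0 hz0 z0 hz0
    simpa using this
  have haddP : ∀ u ∈ P, ∀ v ∈ P, u + v ∈ P := by
    intro u hu v hv
    have := hadd 1 1 zero_le_one zero_le_one u hu v hv
    simpa using this
  have hsmulP : ∀ a : ℝ, 0 ≤ a → ∀ u ∈ P, a • u ∈ P := by
    intro a ha u hu
    have := hadd a 0 ha le_rfl u hu u hu
    simpa using this
  -- sets are nonempty and bounded below
  have hne : ∀ x y : X, ({r : ℝ | ∃ u : E, coneLE P (D x y) u ∧ ‖u‖ = r}).Nonempty := by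
    intro x y
    exact ⟨‖D x y‖, D x y, by simpa [coneLE] using h0P, rfl⟩
  have hbdd : ∀ x y : X, BddBelow {r : ℝ | ∃ u : E, coneLE P (D x y) u ∧ ‖u‖ = r} := by
    intro x y
    exact ⟨0, by rintro r ⟨u, -, rfl⟩; exact norm_nonneg u⟩
  intro x y
  refine le_of_forall_pos_le_add ?_
  intro ε hε
  obtain ⟨r1, ⟨u, hu, rfl⟩, hu2⟩ :=
    Real.lt_sInf_add_pos (hne (T x) x) (half_pos hε)
  obtain ⟨r2, ⟨v, hv, rfl⟩, hv2⟩ :=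
    Real.lt_sInf_add_pos (hne (T y) y) (half_pos hε)
  -- D(Tx,Ty) ≤ lam • (u + v)
  have key : coneLE P (D (T x) (T y)) (lam • (u + v)) := by
    have h1 := h x y
    have h2 : lam • (u + v) - lam • (D (T x) x + D (T y) y) ∈ P := by
      have : lam • (u + v) - lam • (D (T x) x + D (T y) y)
          = lam • (u - D (T x) x) + lam • (v - D (T y) y) := by
        simp [smul_sub, smul_add]; abel
      rw [this]
      exact haddP _ (hsmulP lam hl0 _ hu) _ (hsmulP lam hl0 _ hv)
    have := haddP _ h2 _ h1
    simpa [coneLE, sub_add_sub_cancel] using this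
  have hle : eqMetric P D (T x) (T y) ≤ ‖lam • (u + v)‖ :=
    csInf_le (hbdd _ _) ⟨lam • (u + v), key, rfl⟩
  have hnorm : ‖lam • (u + v)‖ ≤ lam * (‖u‖ + ‖v‖) := by
    rw [norm_smul, Real.norm_of_nonneg hl0]
    exact mul_le_mul_of_nonneg_left (norm_add_le u v) hl0
  have : lam * (‖u‖ + ‖v‖) ≤
      lam * (eqMetric P D (T x) x + eqMetric P D (T y) y + ε) := by
    apply mul_le_mul_of_nonneg_left _ hl0
    have := add_lt_add hu2 hv2
    unfold eqMetric
    linarith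
  have hfin : lam * (eqMetric P D (T x) x + eqMetric P D (T y) y + ε)
      ≤ lam * (eqMetric P D (T x) x + eqMetric P D (T y) y) + ε := by
    nlinarith
  unfold eqMetric at *
  linarith
end

section
/- Let E be a real Banach space, P ⊆ E a cone, D a cone metric on a nonempty set X with equivalent metric d(x,y) = inf{‖u‖ : u ∈ E, D(x,y) ≤ u}, T : X → X a map, and λ ∈ [0,1/2). If D(Tx,Ty) ≤ λ·(D(Tx,y) + D(Ty,x)) for all x, y ∈ X, then d(Tx,Ty) ≤ λ·(d(Tx,y) + d(Ty,x)) for all x, y ∈ X. -/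
theorem stmt8 {E X : Type*} [NormedAddCommGroup E] [NormedSpace ℝ E] [CompleteSpace E]
    [Nonempty X] (P : Set E) (hP : IsCone P)
    (D : X → X → E) (hD : IsConeMetric P D) (T : X → X)
    (lam : ℝ) (hl0 : 0 ≤ lam) (hl1 : lam < 1 / 2)
    (h : ∀ x y : X, coneLE P (D (T x) (T y)) (lam • (D (T x) y + D (T y) x))) :
    ∀ x y : X, eqMetric P D (T x) (T y) ≤
      lam * (eqMetric P D (T x) y + eqMetric P D (T y) x) := by
  obtain ⟨-, ⟨p, hp⟩, -, hadd, -⟩ := hP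
  have h0 : (0 : E) ∈ P := by
    have := hadd 0 0 le_rfl le_rfl p hp p hp
    simpa using this
  have hsum : ∀ u ∈ P, ∀ v ∈ P, u + v ∈ P := by
    intro u hu v hv
    have := hadd 1 1 zero_le_one zero_le_one u hu v hv
    simpa using this
  -- basic facts about the sets defining eqMetric
  set S : X → X → Set ℝ := fun a b => {r : ℝ | ∃ u : E, coneLE P (D a b) u ∧ ‖u‖ = r}
  have hSne : ∀ a b, (S a b).Nonempty := by
    intro a b
    exact ⟨‖D a b‖, D a b, by simp [coneLE, h0], rfl⟩
  have hSbdd : ∀ a b, BddBelow (S a b) := by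
    intro a b
    refine ⟨0, ?_⟩
    rintro r ⟨u, -, rfl⟩
    exact norm_nonneg u
  intro x y
  refine le_of_forall_pos_le_add ?_
  intro ε hε
  have hε2 : 0 < ε / 2 := by linarith
  -- pick approximate witnesses
  have h1 : eqMetric P D (T x) y < eqMetric P D (T x) y + ε / 2 := by linarith
  have h2 : eqMetric P D (T y) x < eqMetric P D (T y) x + ε / 2 := by linarith
  obtain ⟨r1, hr1S, hr1⟩ := exists_lt_of_csInf_lt (hSne (T x) y) h1
  obtain ⟨r2, hr2S, hr2⟩ := exists_lt_of_csInf_lt (hSne (T y) x) h2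
  obtain ⟨u, hu, rfl⟩ := hr1S
  obtain ⟨v, hv, rfl⟩ := hr2S
  -- lam • (u + v) is an upper bound for D (T x) (T y)
  have key : coneLE P (D (T x) (T y)) (lam • (u + v)) := by
    have h3 : lam • (u + v) - lam • (D (T x) y + D (T y) x) ∈ P := by
      have := hadd lam lam hl0 hl0 _ hu _ hv
      unfold coneLE at hu hv
      have heq : lam • (u + v) - lam • (D (T x) y + D (T y) x)
          = lam • (u - D (T x) y) + lam • (v - D (T y) x) := by
        simp [smul_sub, smul_add]; abel
      rw [heq]
      exact this
    have h4 := h x y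
    unfold coneLE at h4 ⊢
    have := hsum _ h3 _ h4
    simpa using this
  have hmem : ‖lam • (u + v)‖ ∈ S (T x) (T y) := ⟨lam • (u + v), key, rfl⟩
  have hle : eqMetric P D (T x) (T y) ≤ ‖lam • (u + v)‖ :=
    csInf_le (hSbdd _ _) hmem
  have hnorm : ‖lam • (u + v)‖ ≤ lam * (‖u‖ + ‖v‖) := by
    rw [norm_smul, Real.norm_of_nonneg hl0]
    exact mul_le_mul_of_nonneg_left (norm_add_le u v) hl0
  calc eqMetric P D (T x) (T y) ≤ lam * (‖u‖ + ‖v‖) := hle.trans hnorm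
    _ ≤ lam * ((eqMetric P D (T x) y + ε / 2) + (eqMetric P D (T y) x + ε / 2)) := by
        apply mul_le_mul_of_nonneg_left _ hl0
        linarith
    _ ≤ lam * (eqMetric P D (T x) y + eqMetric P D (T y) x) + ε := by nlinarith
end

section
/- Let E be a real Banach space, P ⊆ E a cone, D a cone metric on a nonempty set X with equivalent metric d(x,y) = inf{‖u‖ : u ∈ E, D(x,y) ≤ u}, T : X → X a map, and α, β ∈ [0,1). If D(Tx,Ty) ≤ α·D(x,Ty) + β·D(Tx,y) for all x, y ∈ X, then d(Tx,Ty) ≤ α·d(x,Ty) + β·d(Tx,y) for all x, y ∈ X. -/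
theorem stmt9 {E X : Type*} [NormedAddCommGroup E] [NormedSpace ℝ E] [CompleteSpace E]
    [Nonempty X] (P : Set E) (hP : IsCone P)
    (D : X → X → E) (hD : IsConeMetric P D) (T : X → X)
    (α β : ℝ) (hα0 : 0 ≤ α) (hα1 : α < 1) (hβ0 : 0 ≤ β) (hβ1 : β < 1)
    (h : ∀ x y : X, coneLE P (D (T x) (T y)) (α • D x (T y) + β • D (T x) y)) :
    ∀ x y : X, eqMetric P D (T x) (T y) ≤
      α * eqMetric P D x (T y) + β * eqMetric P D (T x) y := by

  obtain ⟨hPclosed, hPne, hPnz, hPadd, hPpt⟩ := hP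
  obtain ⟨hD0, hDeq, hDsymm, hDtri⟩ := hD
  have h0P : (0:E) ∈ P := by
    obtain ⟨z, hz⟩ := hPne
    have := hPadd 0 0 le_rfl le_rfl z hz z hz
    simpa using this
  intro x y
  have hself : ∀ a b : X, coneLE P (D a b) (D a b) := by
    intro a b; simpa [coneLE] using h0P
  set S1 := {r : ℝ | ∃ u : E, coneLE P (D (T x) (T y)) u ∧ ‖u‖ = r} with hS1
  set S2 := {r : ℝ | ∃ u : E, coneLE P (D x (T y)) u ∧ ‖u‖ = r} with hS2
  set S3 := {r : ℝ | ∃ u : E, coneLE P (D (T x) y) u ∧ ‖u‖ = r} with hS3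
  have hS2ne : S2.Nonempty := ⟨‖D x (T y)‖, _, hself _ _, rfl⟩
  have hS3ne : S3.Nonempty := ⟨‖D (T x) y‖, _, hself _ _, rfl⟩
  have hbdd1 : BddBelow S1 := ⟨0, fun r ⟨u, _, hu⟩ => hu ▸ norm_nonneg u⟩
  have he1 : eqMetric P D (T x) (T y) = sInf S1 := rfl
  have he2 : eqMetric P D x (T y) = sInf S2 := rfl
  have he3 : eqMetric P D (T x) y = sInf S3 := rfl
  rw [he1, he2, he3]
  apply le_of_forall_pos_le_add
  intro ε hε
  obtain ⟨r2, ⟨u, hu, hur⟩, hr2⟩ := Real.lt_sInf_add_pos hS2ne (half_pos hε)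
  obtain ⟨r3, ⟨v, hv, hvr⟩, hr3⟩ := Real.lt_sInf_add_pos hS3ne (half_pos hε)
  have hkey : coneLE P (D (T x) (T y)) (α • u + β • v) := by
    have h1 := h x y
    have h2 : (α • u + β • v) - (α • D x (T y) + β • D (T x) y)
        = α • (u - D x (T y)) + β • (v - D (T x) y) := by
      rw [smul_sub, smul_sub]; abel
    have h3 : (α • u + β • v) - (α • D x (T y) + β • D (T x) y) ∈ P := by
      rw [h2]; exact hPadd α β hα0 hβ0 _ hu _ hv
    have := hPadd 1 1 zero_le_one zero_le_one _ h3 _ h1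
    simpa [coneLE, sub_add_sub_cancel] using this
  have hmem : ‖α • u + β • v‖ ∈ S1 := ⟨α • u + β • v, hkey, rfl⟩
  have hle1 : sInf S1 ≤ ‖α • u + β • v‖ := csInf_le hbdd1 hmem
  have hle2 : ‖α • u + β • v‖ ≤ α * ‖u‖ + β * ‖v‖ := by
    calc ‖α • u + β • v‖ ≤ ‖α • u‖ + ‖β • v‖ := norm_add_le _ _
    _ = α * ‖u‖ + β * ‖v‖ := by rw [norm_smul, norm_smul, Real.norm_of_nonneg hα0, Real.norm_of_nonneg hβ0]
  have h2' : ‖u‖ < sInf S2 + ε / 2 := by rw [hur]; exact hr2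
  have h3' : ‖v‖ < sInf S3 + ε / 2 := by rw [hvr]; exact hr3
  nlinarith [norm_nonneg u, norm_nonneg v, mul_le_mul_of_nonneg_left h2'.le hα0, mul_le_mul_of_nonneg_left h3'.le hβ0]
end

section
/- Let E be a real Banach space, P ⊆ E a cone, D a cone metric on a nonempty set X with equivalent metric d(x,y) = inf{‖u‖ : u ∈ E, D(x,y) ≤ u}, T : X → X a map, and α, β ∈ [0,1). If D(Tx,Ty) ≤ α·D(x,Tx) + β·D(y,Ty) for all x, y ∈ X, then d(Tx,Ty) ≤ α·d(x,Tx) + β·d(y,Ty) for all x, y ∈ X. -/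
theorem stmt10 {E X : Type*} [NormedAddCommGroup E] [NormedSpace ℝ E] [CompleteSpace E]
    [Nonempty X] (P : Set E) (hP : IsCone P)
    (D : X → X → E) (hD : IsConeMetric P D) (T : X → X)
    (α β : ℝ) (hα0 : 0 ≤ α) (hα1 : α < 1) (hβ0 : 0 ≤ β) (hβ1 : β < 1)
    (h : ∀ x y : X, coneLE P (D (T x) (T y)) (α • D x (T x) + β • D y (T y))) :
    ∀ x y : X, eqMetric P D (T x) (T y) ≤
      α * eqMetric P D x (T x) + β * eqMetric P D y (T y) := by
  obtain ⟨hcl, ⟨p0, hp0⟩, hne, hadd, hpos⟩ := hP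
  have h0P : (0:E) ∈ P := by
    have := hadd 0 0 le_rfl le_rfl p0 hp0 p0 hp0
    simpa using this
  intro x y
  set A := {r : ℝ | ∃ u : E, coneLE P (D x (T x)) u ∧ ‖u‖ = r} with hA
  set B := {r : ℝ | ∃ u : E, coneLE P (D y (T y)) u ∧ ‖u‖ = r} with hB
  set S := {r : ℝ | ∃ u : E, coneLE P (D (T x) (T y)) u ∧ ‖u‖ = r} with hS
  have hAne : A.Nonempty := ⟨‖D x (T x)‖, D x (T x), by simpa [coneLE] using h0P, rfl⟩
  have hBne : B.Nonempty := ⟨‖D y (T y)‖, D y (T y), by simpa [coneLE] using h0P, rfl⟩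
  have hSbd : BddBelow S := ⟨0, by rintro r ⟨u, _, rfl⟩; exact norm_nonneg u⟩
  have key : ∀ r ∈ A, ∀ s ∈ B, sInf S ≤ α * r + β * s := by
    rintro r ⟨u, hu, rfl⟩ s ⟨v, hv, rfl⟩
    have hmem : coneLE P (D (T x) (T y)) (α • u + β • v) := by
      have h1 : α • (u - D x (T x)) + β • (v - D y (T y)) ∈ P := hadd α β hα0 hβ0 _ hu _ hv
      have h2 := h x y
      have h3 := hadd 1 1 zero_le_one zero_le_one _ h1 _ h2
      unfold coneLE at *
      convert h3 using 1
      simp only [one_smul, smul_sub]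
      abel
    have h4 : sInf S ≤ ‖α • u + β • v‖ := csInf_le hSbd ⟨_, hmem, rfl⟩
    refine h4.trans ?_
    refine (norm_add_le _ _).trans ?_
    simp [norm_smul, abs_of_nonneg hα0, abs_of_nonneg hβ0]
  show sInf S ≤ α * sInf A + β * sInf B
  refine le_of_forall_pos_le_add fun ε hε => ?_
  obtain ⟨r, hrA, hr⟩ := Real.lt_sInf_add_pos hAne (half_pos hε)
  obtain ⟨s, hsB, hs⟩ := Real.lt_sInf_add_pos hBne (half_pos hε)
  have := key r hrA s hsB
  nlinarith [mul_le_mul_of_nonneg_left hr.le hα0, mul_le_mul_of_nonneg_left hs.le hβ0]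
end

section
/- Let E be a real Banach space, P ⊆ E a cone, D a cone metric on a nonempty set X with equivalent metric d(x,y) = inf{‖u‖ : u ∈ E, D(x,y) ≤ u}, T : X → X a map, and α ∈ (0,1). Suppose for all x, y ∈ X there exists u ∈ {D(x,y), D(x,Tx), D(y,Ty), (1/2)·(D(x,Ty) + D(y,Tx))} such that D(Tx,Ty) ≤ α·u. Then for all x, y ∈ X, d(Tx,Ty) ≤ α·max{d(x,y), d(x,Tx), d(y,Ty), (1/2)·(d(x,Ty) + d(y,Tx))}. -/
theorem stmt11 {E X : Type*} [NormedAddCommGroup E] [NormedSpace ℝ E] [CompleteSpace E]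
    [Nonempty X] (P : Set E) (hP : IsCone P)
    (D : X → X → E) (hD : IsConeMetric P D) (T : X → X)
    (α : ℝ) (hα0 : 0 < α) (hα1 : α < 1)
    (h : ∀ x y : X, ∃ u ∈ ({D x y, D x (T x), D y (T y),
        (2⁻¹ : ℝ) • (D x (T y) + D y (T x))} : Set E),
        coneLE P (D (T x) (T y)) (α • u)) :
    ∀ x y : X, eqMetric P D (T x) (T y) ≤
      α * max (max (eqMetric P D x y) (eqMetric P D x (T x)))
              (max (eqMetric P D y (T y))
                   (2⁻¹ * (eqMetric P D x (T y) + eqMetric P D y (T x)))) := by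
  obtain ⟨hcl, ⟨x0, hx0⟩, hne0, hadd, hpt⟩ := hP
  have h0 : (0:E) ∈ P := by
    have := hadd 0 0 le_rfl le_rfl x0 hx0 x0 hx0
    simpa using this
  have hsum : ∀ a ∈ P, ∀ b ∈ P, a + b ∈ P := by
    intro a ha b hb
    have := hadd 1 1 zero_le_one zero_le_one a ha b hb
    simpa using this
  have hsmul : ∀ (a:ℝ), 0 ≤ a → ∀ u ∈ P, a • u ∈ P := by
    intro a ha u hu
    have := hadd a 0 ha le_rfl u hu u hu
    simpa using this
  have htrans : ∀ a b c : E, coneLE P a b → coneLE P b c → coneLE P a c := by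
    intro a b c hab hbc
    have := hsum _ hbc _ hab
    simpa [coneLE, sub_add_sub_cancel] using this
  obtain ⟨h0D, hiff, hsymm, htri⟩ := hD
  have hSbdd : ∀ x y : X, BddBelow {r : ℝ | ∃ u, coneLE P (D x y) u ∧ ‖u‖ = r} := by
    intro x y
    exact ⟨0, by rintro r ⟨u, _, rfl⟩; exact norm_nonneg u⟩
  have hSne : ∀ x y : X, ({r : ℝ | ∃ u, coneLE P (D x y) u ∧ ‖u‖ = r}).Nonempty := by
    intro x y
    exact ⟨‖D x y‖, D x y, by simp [coneLE, h0], rfl⟩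
  have hle : ∀ (x y : X) (u : E), coneLE P (D x y) u → eqMetric P D x y ≤ ‖u‖ := by
    intro x y u hu
    exact csInf_le (hSbdd x y) ⟨u, hu, rfl⟩
  have hexists : ∀ (x y : X) (ε : ℝ), 0 < ε →
      ∃ u, coneLE P (D x y) u ∧ ‖u‖ < eqMetric P D x y + ε := by
    intro x y ε hε
    obtain ⟨r, ⟨u, hu, rfl⟩, hr⟩ := exists_lt_of_csInf_lt (hSne x y)
      (lt_add_of_pos_right _ hε : eqMetric P D x y < eqMetric P D x y + ε)
    exact ⟨u, hu, hr⟩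
  intro x y
  set M := max (max (eqMetric P D x y) (eqMetric P D x (T x)))
      (max (eqMetric P D y (T y))
        (2⁻¹ * (eqMetric P D x (T y) + eqMetric P D y (T x)))) with hM
  obtain ⟨u, hu, hDu⟩ := h x y
  apply le_of_forall_pos_le_add
  intro ε hε
  have key : ∀ a b : X, u = D a b → eqMetric P D a b ≤ M →
      eqMetric P D (T x) (T y) ≤ α * M + ε := by
    intro a b huab habM
    obtain ⟨v, hv, hvn⟩ := hexists a b ε hε
    have h1 : coneLE P (D (T x) (T y)) (α • v) := by
      refine htrans _ (α • u) _ hDu ?_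
      have : α • v - α • u = α • (v - D a b) := by rw [huab, smul_sub]
      simpa [coneLE, this] using hsmul α hα0.le _ hv
    have h2 : eqMetric P D (T x) (T y) ≤ α * ‖v‖ := by
      have := hle _ _ _ h1
      rwa [norm_smul, Real.norm_eq_abs, abs_of_pos hα0] at this
    calc eqMetric P D (T x) (T y) ≤ α * ‖v‖ := h2
      _ ≤ α * (eqMetric P D a b + ε) := by nlinarith [norm_nonneg v]
      _ = α * eqMetric P D a b + α * ε := by ring
      _ ≤ α * M + ε := by nlinarith
  simp only [Set.mem_insert_iff, Set.mem_singleton_iff] at hu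
  rcases hu with hu | hu | hu | hu
  · exact key x y hu (le_trans (le_max_left _ _) (le_max_left _ _))
  · exact key x (T x) hu (le_trans (le_max_right _ _) (le_max_left _ _))
  · exact key y (T y) hu (le_trans (le_max_left _ _) (le_max_right _ _))
  · -- u = 2⁻¹ • (D x (T y) + D y (T x))
    obtain ⟨v, hv, hvn⟩ := hexists x (T y) ε hε
    obtain ⟨w, hw, hwn⟩ := hexists y (T x) ε hε
    have h1 : coneLE P (D (T x) (T y)) (α • ((2⁻¹ : ℝ) • (v + w))) := by
      refine htrans _ (α • u) _ hDu ?_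
      have heq : α • ((2⁻¹ : ℝ) • (v + w)) - α • u
          = (α * 2⁻¹) • ((v - D x (T y)) + (w - D y (T x))) := by
        rw [hu]; simp only [smul_smul, smul_sub, smul_add]; abel
      have hmem := hsmul (α * 2⁻¹) (by positivity) _ (hsum _ hv _ hw)
      show α • ((2⁻¹ : ℝ) • (v + w)) - α • u ∈ P
      rw [heq]; exact hmem
    have h2 : eqMetric P D (T x) (T y) ≤ α * (2⁻¹ * (‖v‖ + ‖w‖)) := by
      have := hle _ _ _ h1
      calc eqMetric P D (T x) (T y) ≤ ‖α • ((2⁻¹ : ℝ) • (v + w))‖ := this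
        _ = α * (2⁻¹ * ‖v + w‖) := by
            rw [norm_smul, norm_smul, Real.norm_eq_abs, Real.norm_eq_abs,
              abs_of_pos hα0, abs_of_pos (by norm_num : (0:ℝ) < 2⁻¹)]
        _ ≤ α * (2⁻¹ * (‖v‖ + ‖w‖)) := by
            have := norm_add_le v w
            nlinarith
    have hMle : 2⁻¹ * (eqMetric P D x (T y) + eqMetric P D y (T x)) ≤ M :=
      le_trans (le_max_right _ _) (le_max_right _ _)
    calc eqMetric P D (T x) (T y) ≤ α * (2⁻¹ * (‖v‖ + ‖w‖)) := h2
      _ ≤ α * (2⁻¹ * (eqMetric P D x (T y) + eqMetric P D y (T x)) + ε) := by nlinarith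
      _ ≤ α * M + ε := by nlinarith
end

section
/- Let E be a real Banach space, P ⊆ E a cone, D a cone metric on a nonempty set X with equivalent metric d(x,y) = inf{‖u‖ : u ∈ E, D(x,y) ≤ u}, T : X → X a map, and β ∈ (0,1). Suppose for all x, y ∈ X there exists u ∈ {D(x,y), D(x,Tx), D(y,Ty), (1/2)·D(x,Ty), (1/2)·D(y,Tx)} such that D(Tx,Ty) ≤ β·u. Then for all x, y ∈ X, d(Tx,Ty) ≤ β·max{d(x,y), d(x,Tx), d(y,Ty), (1/2)·d(x,Ty), (1/2)·d(y,Tx)}. -/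
theorem stmt12 {E X : Type*} [NormedAddCommGroup E] [NormedSpace ℝ E] [CompleteSpace E]
    [Nonempty X] (P : Set E) (hP : IsCone P)
    (D : X → X → E) (hD : IsConeMetric P D) (T : X → X)
    (β : ℝ) (hβ0 : 0 < β) (hβ1 : β < 1)
    (h : ∀ x y : X, ∃ u ∈ ({D x y, D x (T x), D y (T y),
        (2⁻¹ : ℝ) • D x (T y), (2⁻¹ : ℝ) • D y (T x)} : Set E),
        coneLE P (D (T x) (T y)) (β • u)) :
    ∀ x y : X, eqMetric P D (T x) (T y) ≤
      β * max (max (eqMetric P D x y) (eqMetric P D x (T x)))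
              (max (eqMetric P D y (T y))
                   (max (2⁻¹ * eqMetric P D x (T y)) (2⁻¹ * eqMetric P D y (T x)))) := by
  obtain ⟨hPcl, hPne, hPne0, hPadd, hPpt⟩ := hP
  have h0P : (0 : E) ∈ P := by
    obtain ⟨z, hz⟩ := hPne
    have := hPadd 0 0 le_rfl le_rfl z hz z hz
    simpa using this
  have hsmul : ∀ (a : ℝ), 0 ≤ a → ∀ x ∈ P, a • x ∈ P := by
    intro a ha x hx
    have := hPadd a 0 ha le_rfl x hx x hx
    simpa using this
  have hadd : ∀ x ∈ P, ∀ y ∈ P, x + y ∈ P := by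
    intro x hx y hy
    have := hPadd 1 1 zero_le_one zero_le_one x hx y hy
    simpa using this
  intro x y
  set S : X → X → Set ℝ := fun a b => {r : ℝ | ∃ u : E, coneLE P (D a b) u ∧ ‖u‖ = r} with hS
  have hSne : ∀ a b : X, (S a b).Nonempty := by
    intro a b
    exact ⟨‖D a b‖, D a b, by simp [coneLE, h0P], rfl⟩
  have hSbd : ∀ a b : X, BddBelow (S a b) := by
    intro a b
    refine ⟨0, ?_⟩
    rintro r ⟨u, _, rfl⟩
    exact norm_nonneg u
  have hEM : ∀ a b : X, eqMetric P D a b = sInf (S a b) := fun a b => rfl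
  -- key lemma
  have key : ∀ (a b : X) (c : ℝ), 0 < c →
      coneLE P (D (T x) (T y)) (c • D a b) →
      eqMetric P D (T x) (T y) ≤ c * eqMetric P D a b := by
    intro a b c hc hle
    have hdiv : eqMetric P D (T x) (T y) / c ≤ sInf (S a b) := by
      apply le_csInf (hSne a b)
      rintro r ⟨v, hv, rfl⟩
      -- c • v is an upper bound for D (T x) (T y)
      have h1 : c • v - c • D a b ∈ P := by
        have := hsmul c hc.le _ hv
        simpa [smul_sub] using this
      have h2 : coneLE P (D (T x) (T y)) (c • v) := by
        have := hadd _ h1 _ hle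
        simpa [coneLE, sub_add_sub_cancel] using this
      have hmem : ‖c • v‖ ∈ S (T x) (T y) := ⟨c • v, h2, rfl⟩
      have := csInf_le (hSbd (T x) (T y)) hmem
      rw [hEM]
      rw [div_le_iff₀ hc]
      calc sInf (S (T x) (T y)) ≤ ‖c • v‖ := this
        _ = c * ‖v‖ := by rw [norm_smul]; simp [abs_of_pos hc]
        _ = ‖v‖ * c := mul_comm _ _
    rw [div_le_iff₀ hc] at hdiv
    rw [hEM a b]
    linarith [hdiv]
  -- nonnegativity of eqMetric
  have hnn : ∀ a b : X, 0 ≤ eqMetric P D a b := by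
    intro a b
    rw [hEM]
    apply le_csInf (hSne a b)
    rintro r ⟨u, _, rfl⟩
    exact norm_nonneg u
  obtain ⟨u, hu, hle⟩ := h x y
  set M := max (max (eqMetric P D x y) (eqMetric P D x (T x)))
              (max (eqMetric P D y (T y))
                   (max (2⁻¹ * eqMetric P D x (T y)) (2⁻¹ * eqMetric P D y (T x)))) with hM
  simp only [Set.mem_insert_iff, Set.mem_singleton_iff] at hu
  rcases hu with rfl | rfl | rfl | rfl | rfl
  · have := key x y β hβ0 hle
    have hle2 : eqMetric P D x y ≤ M := le_trans (le_max_left _ _) (le_max_left _ _)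
    calc eqMetric P D (T x) (T y) ≤ β * eqMetric P D x y := this
      _ ≤ β * M := by nlinarith
  · have := key x (T x) β hβ0 hle
    have hle2 : eqMetric P D x (T x) ≤ M := le_trans (le_max_right _ _) (le_max_left _ _)
    calc eqMetric P D (T x) (T y) ≤ β * eqMetric P D x (T x) := this
      _ ≤ β * M := by nlinarith
  · have := key y (T y) β hβ0 hle
    have hle2 : eqMetric P D y (T y) ≤ M := le_trans (le_max_left _ _) (le_max_right _ _)
    calc eqMetric P D (T x) (T y) ≤ β * eqMetric P D y (T y) := this
      _ ≤ β * M := by nlinarith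
  · have hle' : coneLE P (D (T x) (T y)) ((β * 2⁻¹) • D x (T y)) := by
      simpa [smul_smul] using hle
    have := key x (T y) (β * 2⁻¹) (by positivity) hle'
    have hle2 : 2⁻¹ * eqMetric P D x (T y) ≤ M :=
      le_trans (le_max_left _ _) (le_trans (le_max_right _ _) (le_max_right _ _))
    calc eqMetric P D (T x) (T y) ≤ (β * 2⁻¹) * eqMetric P D x (T y) := this
      _ = β * (2⁻¹ * eqMetric P D x (T y)) := by ring
      _ ≤ β * M := by nlinarith
  · have hle' : coneLE P (D (T x) (T y)) ((β * 2⁻¹) • D y (T x)) := by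
      simpa [smul_smul] using hle
    have := key y (T x) (β * 2⁻¹) (by positivity) hle'
    have hle2 : 2⁻¹ * eqMetric P D y (T x) ≤ M :=
      le_trans (le_max_right _ _) (le_trans (le_max_right _ _) (le_max_right _ _))
    calc eqMetric P D (T x) (T y) ≤ (β * 2⁻¹) * eqMetric P D y (T x) := this
      _ = β * (2⁻¹ * eqMetric P D y (T x)) := by ring
      _ ≤ β * M := by nlinarith
end

section
/- Let E be a real Banach space, P ⊆ E a cone, D a cone metric on a nonempty set X with equivalent metric d(x,y) = inf{‖u‖ : u ∈ E, D(x,y) ≤ u}, T : X → X a map, and a₁, a₂, a₃, a₄, a₅ ≥ 0 with a₁ + a₂ + a₃ + a₄ + a₅ < 1. If D(Tx,Ty) ≤ a₁·D(x,y) + a₂·D(x,Tx) + a₃·D(y,Ty) + a₄·D(x,Ty) + a₅·D(y,Tx) for all x, y ∈ X, then d(Tx,Ty) ≤ a₁·d(x,y) + a₂·d(x,Tx) + a₃·d(y,Ty) + a₄·d(x,Ty) + a₅·d(y,Tx) for all x, y ∈ X. -/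
theorem stmt14 {E X : Type*} [NormedAddCommGroup E] [NormedSpace ℝ E] [CompleteSpace E]
    [Nonempty X] (P : Set E) (hP : IsCone P)
    (D : X → X → E) (hD : IsConeMetric P D) (T : X → X)
    (a₁ a₂ a₃ a₄ a₅ : ℝ) (h1 : 0 ≤ a₁) (h2 : 0 ≤ a₂) (h3 : 0 ≤ a₃) (h4 : 0 ≤ a₄)
    (h5 : 0 ≤ a₅) (hsum : a₁ + a₂ + a₃ + a₄ + a₅ < 1)
    (h : ∀ x y : X, coneLE P (D (T x) (T y))
        (a₁ • D x y + a₂ • D x (T x) + a₃ • D y (T y) + a₄ • D x (T y) + a₅ • D y (T x))) :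
    ∀ x y : X, eqMetric P D (T x) (T y) ≤
      a₁ * eqMetric P D x y + a₂ * eqMetric P D x (T x) + a₃ * eqMetric P D y (T y) +
        a₄ * eqMetric P D x (T y) + a₅ * eqMetric P D y (T x) := by
  obtain ⟨-, ⟨p, hp⟩, -, hadd, -⟩ := hP
  have h0P : (0:E) ∈ P := by simpa using hadd 0 0 le_rfl le_rfl p hp p hp
  have hsmul : ∀ (a : ℝ), 0 ≤ a → ∀ x ∈ P, a • x ∈ P := fun a ha x hx => by
    simpa using hadd a 0 ha le_rfl x hx x hx
  have haddP : ∀ x ∈ P, ∀ y ∈ P, x + y ∈ P := fun x hx y hy => by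
    simpa using hadd 1 1 zero_le_one zero_le_one x hx y hy
  have htrans : ∀ a b c : E, coneLE P a b → coneLE P b c → coneLE P a c := by
    intro a b c hab hbc
    have := haddP _ hbc _ hab
    simpa [coneLE, sub_add_sub_cancel] using this
  have hsle : ∀ (a : ℝ), 0 ≤ a → ∀ u v : E, coneLE P u v → coneLE P (a • u) (a • v) := by
    intro a ha u v huv
    have := hsmul a ha _ huv
    simpa [coneLE, smul_sub] using this
  have hale : ∀ u v w z : E, coneLE P u v → coneLE P w z → coneLE P (u + w) (v + z) := by
    intro u v w z huv hwz
    have := haddP _ huv _ hwz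
    simpa [coneLE, sub_add_sub_comm] using this
  intro x y
  have hSne : ∀ a b : X, {r : ℝ | ∃ u : E, coneLE P (D a b) u ∧ ‖u‖ = r}.Nonempty :=
    fun a b => ⟨‖D a b‖, D a b, by simpa [coneLE] using h0P, rfl⟩
  have hSbdd : ∀ a b : X, BddBelow {r : ℝ | ∃ u : E, coneLE P (D a b) u ∧ ‖u‖ = r} :=
    fun a b => ⟨0, by rintro r ⟨u, -, rfl⟩; exact norm_nonneg u⟩
  refine le_of_forall_pos_le_add ?_
  intro ε hε
  have hch : ∀ a b : X, ∃ u : E, coneLE P (D a b) u ∧ ‖u‖ < eqMetric P D a b + ε := by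
    intro a b
    have : sInf {r : ℝ | ∃ u : E, coneLE P (D a b) u ∧ ‖u‖ = r} < eqMetric P D a b + ε :=
      lt_add_of_pos_right _ hε
    obtain ⟨r, ⟨u, hu, rfl⟩, hr⟩ := exists_lt_of_csInf_lt (hSne a b) this
    exact ⟨u, hu, hr⟩
  obtain ⟨u₁, hu₁, hn₁⟩ := hch x y
  obtain ⟨u₂, hu₂, hn₂⟩ := hch x (T x)
  obtain ⟨u₃, hu₃, hn₃⟩ := hch y (T y)
  obtain ⟨u₄, hu₄, hn₄⟩ := hch x (T y)
  obtain ⟨u₅, hu₅, hn₅⟩ := hch y (T x)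
  set u : E := a₁ • u₁ + a₂ • u₂ + a₃ • u₃ + a₄ • u₄ + a₅ • u₅ with hu_def
  have hle : coneLE P (D (T x) (T y)) u := by
    refine htrans _ _ _ (h x y) ?_
    exact hale _ _ _ _ (hale _ _ _ _ (hale _ _ _ _ (hale _ _ _ _
      (hsle a₁ h1 _ _ hu₁) (hsle a₂ h2 _ _ hu₂)) (hsle a₃ h3 _ _ hu₃))
      (hsle a₄ h4 _ _ hu₄)) (hsle a₅ h5 _ _ hu₅)
  have hstep : eqMetric P D (T x) (T y) ≤ ‖u‖ :=
    csInf_le (hSbdd (T x) (T y)) ⟨u, hle, rfl⟩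
  have hnorm : ‖u‖ ≤ a₁ * ‖u₁‖ + a₂ * ‖u₂‖ + a₃ * ‖u₃‖ + a₄ * ‖u₄‖ + a₅ * ‖u₅‖ := by
    calc ‖u‖ ≤ ‖a₁ • u₁‖ + ‖a₂ • u₂‖ + ‖a₃ • u₃‖ + ‖a₄ • u₄‖ + ‖a₅ • u₅‖ := by
          rw [hu_def]
          exact le_trans (norm_add_le _ _) (add_le_add
            (le_trans (norm_add_le _ _) (add_le_add
              (le_trans (norm_add_le _ _) (add_le_add (norm_add_le _ _) le_rfl)) le_rfl)) le_rfl)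
      _ = a₁ * ‖u₁‖ + a₂ * ‖u₂‖ + a₃ * ‖u₃‖ + a₄ * ‖u₄‖ + a₅ * ‖u₅‖ := by
          simp [norm_smul, abs_of_nonneg, h1, h2, h3, h4, h5]
  have hd₁ : 0 ≤ eqMetric P D x y + ε := le_trans (norm_nonneg u₁) hn₁.le
  nlinarith [hstep, hnorm, hn₁, hn₂, hn₃, hn₄, hn₅,
    mul_le_mul_of_nonneg_left hn₁.le h1, mul_le_mul_of_nonneg_left hn₂.le h2,
    mul_le_mul_of_nonneg_left hn₃.le h3, mul_le_mul_of_nonneg_left hn₄.le h4,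
    mul_le_mul_of_nonneg_left hn₅.le h5, mul_nonneg h1 hε.le, mul_nonneg h2 hε.le,
    mul_nonneg h3 hε.le, mul_nonneg h4 hε.le, mul_nonneg h5 hε.le, hε]
end

section
/- Let E be a real Banach space, P ⊆ E a cone, D a cone metric on a nonempty set X with equivalent metric d(x,y) = inf{‖u‖ : u ∈ E, D(x,y) ≤ u}, T : X → X a map, and λ ∈ [0,1/2). Suppose for all x, y ∈ X there exists u ∈ {D(x,y), D(x,Tx), D(y,Ty), D(x,Ty), D(y,Tx)} such that D(Tx,Ty) ≤ λ·u. Then for all x, y ∈ X, d(Tx,Ty) ≤ λ·max{d(x,y), d(x,Tx), d(y,Ty), d(x,Ty), d(y,Tx)}. -/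
theorem stmt15 {E X : Type*} [NormedAddCommGroup E] [NormedSpace ℝ E] [CompleteSpace E]
    [Nonempty X] (P : Set E) (hP : IsCone P)
    (D : X → X → E) (hD : IsConeMetric P D) (T : X → X)
    (lam : ℝ) (hl0 : 0 ≤ lam) (hl1 : lam < 1 / 2)
    (h : ∀ x y : X, ∃ u ∈ ({D x y, D x (T x), D y (T y), D x (T y), D y (T x)} : Set E),
        coneLE P (D (T x) (T y)) (lam • u)) :
    ∀ x y : X, eqMetric P D (T x) (T y) ≤
      lam * max (max (eqMetric P D x y) (eqMetric P D x (T x)))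
                (max (eqMetric P D y (T y))
                     (max (eqMetric P D x (T y)) (eqMetric P D y (T x)))) := by
  obtain ⟨hclosed, hne, hne0, hadd, hpt⟩ := hP
  obtain ⟨p0, hp0⟩ := hne
  have h0P : (0 : E) ∈ P := by
    have := hadd 0 0 le_rfl le_rfl p0 hp0 p0 hp0
    simpa using this
  have hsmul : ∀ c : ℝ, 0 ≤ c → ∀ x ∈ P, c • x ∈ P := by
    intro c hc x hx
    have := hadd c 0 hc le_rfl x hx x hx
    simpa using this
  have haddP : ∀ x ∈ P, ∀ y ∈ P, x + y ∈ P := by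
    intro x hx y hy
    have := hadd 1 1 zero_le_one zero_le_one x hx y hy
    simpa using this
  have hbdd : ∀ p q : X, BddBelow {r : ℝ | ∃ u : E, coneLE P (D p q) u ∧ ‖u‖ = r} :=
    fun p q => ⟨0, fun r ⟨u, _, hu⟩ => hu ▸ norm_nonneg u⟩
  have hmem : ∀ p q : X, (‖D p q‖ : ℝ) ∈ {r : ℝ | ∃ u : E, coneLE P (D p q) u ∧ ‖u‖ = r} :=
    fun p q => ⟨D p q, by simpa [coneLE] using h0P, rfl⟩
  have key : ∀ p q a b : X, coneLE P (D p q) (lam • D a b) →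
      eqMetric P D p q ≤ lam * eqMetric P D a b := by
    intro p q a b hle
    have hstep : ∀ v : E, coneLE P (D a b) v → eqMetric P D p q ≤ lam * ‖v‖ := by
      intro v hv
      have h1 : lam • v - lam • D a b ∈ P := by
        have := hsmul lam hl0 _ hv
        simpa [coneLE, smul_sub] using this
      have h2 : coneLE P (D p q) (lam • v) := by
        have := haddP _ h1 _ hle
        simpa [coneLE, sub_add_sub_cancel] using this
      have hm : lam * ‖v‖ ∈ {r : ℝ | ∃ u : E, coneLE P (D p q) u ∧ ‖u‖ = r} :=
        ⟨lam • v, h2, by rw [norm_smul, Real.norm_of_nonneg hl0]⟩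
      exact csInf_le (hbdd p q) hm
    rcases eq_or_lt_of_le hl0 with h0 | h0
    · rw [← h0, zero_mul]
      have := hstep (D a b) (by simpa [coneLE] using h0P)
      simpa [← h0] using this
    · have hdiv : eqMetric P D p q / lam ≤ eqMetric P D a b := by
        apply le_csInf ⟨_, hmem a b⟩
        rintro r ⟨u, hu, rfl⟩
        rw [div_le_iff₀ h0, mul_comm]
        exact hstep u hu
      have := (div_le_iff₀ h0).mp hdiv
      linarith
  intro x y
  obtain ⟨u, hu, hle⟩ := h x y
  simp only [Set.mem_insert_iff, Set.mem_singleton_iff] at hu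
  have hmax : ∀ a b : X, coneLE P (D (T x) (T y)) (lam • D a b) →
      eqMetric P D a b ≤ max (max (eqMetric P D x y) (eqMetric P D x (T x)))
                (max (eqMetric P D y (T y))
                     (max (eqMetric P D x (T y)) (eqMetric P D y (T x)))) →
      eqMetric P D (T x) (T y) ≤
      lam * max (max (eqMetric P D x y) (eqMetric P D x (T x)))
                (max (eqMetric P D y (T y))
                     (max (eqMetric P D x (T y)) (eqMetric P D y (T x)))) := by
    intro a b hab hmx
    exact le_trans (key _ _ _ _ hab) (mul_le_mul_of_nonneg_left hmx hl0)
  rcases hu with h1 | h1 | h1 | h1 | h1 <;> subst h1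
  · exact hmax x y hle (by simp [le_max_iff])
  · exact hmax x (T x) hle (by simp [le_max_iff])
  · exact hmax y (T y) hle (by simp [le_max_iff])
  · exact hmax x (T y) hle (by simp [le_max_iff])
  · exact hmax y (T x) hle (by simp [le_max_iff])
end

section
/- Let E be a real Banach space, P ⊆ E a cone, D a cone metric on a nonempty set X with equivalent metric d(x,y) = inf{‖u‖ : u ∈ E, D(x,y) ≤ u}, T : X → X a map, and a₁, a₂, a₃, a₄ ≥ 0 with a₁ + a₂ + a₃ + 2a₄ < 1. If D(Tx,Ty) ≤ a₁·D(x,y) + a₂·D(x,Tx) + a₃·D(y,Ty) + a₄·(D(x,Ty) + D(y,Tx)) for all x, y ∈ X, then d(Tx,Ty) ≤ a₁·d(x,y) + a₂·d(x,Tx) + a₃·d(y,Ty) + a₄·(d(x,Ty) + d(y,Tx)) for all x, y ∈ X. -/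
theorem stmt16 {E X : Type*} [NormedAddCommGroup E] [NormedSpace ℝ E] [CompleteSpace E]
    [Nonempty X] (P : Set E) (hP : IsCone P)
    (D : X → X → E) (hD : IsConeMetric P D) (T : X → X)
    (a₁ a₂ a₃ a₄ : ℝ) (h1 : 0 ≤ a₁) (h2 : 0 ≤ a₂) (h3 : 0 ≤ a₃) (h4 : 0 ≤ a₄)
    (hsum : a₁ + a₂ + a₃ + 2 * a₄ < 1)
    (h : ∀ x y : X, coneLE P (D (T x) (T y))
        (a₁ • D x y + a₂ • D x (T x) + a₃ • D y (T y) + a₄ • (D x (T y) + D y (T x)))) :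
    ∀ x y : X, eqMetric P D (T x) (T y) ≤
      a₁ * eqMetric P D x y + a₂ * eqMetric P D x (T x) + a₃ * eqMetric P D y (T y) +
        a₄ * (eqMetric P D x (T y) + eqMetric P D y (T x)) := by
  obtain ⟨hclosed, ⟨p0, hp0⟩, hne, hcomb, hanti⟩ := hP
  have h0P : (0:E) ∈ P := by
    simpa using hcomb 0 0 le_rfl le_rfl p0 hp0 p0 hp0
  have haddP : ∀ x ∈ P, ∀ y ∈ P, x + y ∈ P := by
    intro x hx y hy
    simpa using hcomb 1 1 zero_le_one zero_le_one x hx y hy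
  have hSne : ∀ x y : X, {r : ℝ | ∃ u : E, coneLE P (D x y) u ∧ ‖u‖ = r}.Nonempty := by
    intro x y
    exact ⟨‖D x y‖, D x y, by simpa [coneLE] using h0P, rfl⟩
  have hSbdd : ∀ x y : X, BddBelow {r : ℝ | ∃ u : E, coneLE P (D x y) u ∧ ‖u‖ = r} := by
    intro x y
    exact ⟨0, fun r ⟨u, _, hu⟩ => hu ▸ norm_nonneg u⟩
  have hle : ∀ (x y : X) (v : E), coneLE P (D x y) v → eqMetric P D x y ≤ ‖v‖ := by
    intro x y v hv
    exact csInf_le (hSbdd x y) ⟨v, hv, rfl⟩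
  intro x y
  refine le_of_forall_pos_le_add ?_
  intro ε hε
  obtain ⟨r1, ⟨u1, hu1, hr1⟩, hlt1⟩ := Real.lt_sInf_add_pos (hSne x y) hε
  obtain ⟨r2, ⟨u2, hu2, hr2⟩, hlt2⟩ := Real.lt_sInf_add_pos (hSne x (T x)) hε
  obtain ⟨r3, ⟨u3, hu3, hr3⟩, hlt3⟩ := Real.lt_sInf_add_pos (hSne y (T y)) hε
  obtain ⟨r4, ⟨u4, hu4, hr4⟩, hlt4⟩ := Real.lt_sInf_add_pos (hSne x (T y)) hε
  obtain ⟨r5, ⟨u5, hu5, hr5⟩, hlt5⟩ := Real.lt_sInf_add_pos (hSne y (T x)) hε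
  set v := a₁ • u1 + a₂ • u2 + a₃ • u3 + a₄ • (u4 + u5) with hv
  have key : coneLE P (D (T x) (T y)) v := by
    have hA := hcomb a₁ a₂ h1 h2 _ hu1 _ hu2
    have h45 : (u4 + u5) - (D x (T y) + D y (T x)) ∈ P := by
      have := haddP _ hu4 _ hu5
      convert this using 1
      abel
    have hB := hcomb a₃ a₄ h3 h4 _ hu3 _ h45
    have hAB := haddP _ hA _ hB
    have hsum2 := haddP _ (h x y) _ hAB
    unfold coneLE at *
    convert hsum2 using 1
    simp only [smul_sub]
    module
  have hnorm : ‖v‖ ≤ a₁ * r1 + a₂ * r2 + a₃ * r3 + a₄ * (r4 + r5) := by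
    rw [hv, ← hr1, ← hr2, ← hr3, ← hr4, ← hr5]
    calc ‖a₁ • u1 + a₂ • u2 + a₃ • u3 + a₄ • (u4 + u5)‖
        ≤ ‖a₁ • u1‖ + ‖a₂ • u2‖ + ‖a₃ • u3‖ + ‖a₄ • (u4 + u5)‖ := by
          exact le_trans (norm_add_le _ _) (by gcongr; exact le_trans (norm_add_le _ _) (by gcongr; exact norm_add_le _ _))
      _ ≤ a₁ * ‖u1‖ + a₂ * ‖u2‖ + a₃ * ‖u3‖ + a₄ * (‖u4‖ + ‖u5‖) := by
          simp only [norm_smul, Real.norm_eq_abs, abs_of_nonneg h1, abs_of_nonneg h2,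
            abs_of_nonneg h3, abs_of_nonneg h4]
          gcongr
          exact norm_add_le _ _
  have hd := hle _ _ _ key
  have hεle : (a₁ + a₂ + a₃ + 2 * a₄) * ε ≤ ε := by
    nlinarith [hε.le]
  have e1 : r1 < eqMetric P D x y + ε := hlt1
  have e2 : r2 < eqMetric P D x (T x) + ε := hlt2
  have e3 : r3 < eqMetric P D y (T y) + ε := hlt3
  have e4 : r4 < eqMetric P D x (T y) + ε := hlt4
  have e5 : r5 < eqMetric P D y (T x) + ε := hlt5
  nlinarith [hd, hnorm, mul_le_mul_of_nonneg_left e1.le h1,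
    mul_le_mul_of_nonneg_left e2.le h2, mul_le_mul_of_nonneg_left e3.le h3,
    mul_le_mul_of_nonneg_left e4.le h4, mul_le_mul_of_nonneg_left e5.le h4]
end

section
/- Let E be a real Banach space, P ⊆ E a cone, D a cone metric on a nonempty set X with equivalent metric d(x,y) = inf{‖u‖ : u ∈ E, D(x,y) ≤ u}, T : X → X a map, m, n ∈ ℕ, and k ∈ [0,1). Fix x, y ∈ X and let z, t ∈ {x, y} ∪ {T^p x : 1 ≤ p ≤ m} ∪ {T^q y : 1 ≤ q ≤ n} with z ≠ t. If D(T^m x, T^n y) ≤ k·D(z,t), then d(T^m x, T^n y) ≤ k·d(z,t). -/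
open scoped Pointwise in
theorem stmt17 {E X : Type*} [NormedAddCommGroup E] [NormedSpace ℝ E] [CompleteSpace E]
    [Nonempty X] (P : Set E) (hP : IsCone P)
    (D : X → X → E) (hD : IsConeMetric P D) (T : X → X)
    (m n : ℕ) (k : ℝ) (hk0 : 0 ≤ k) (hk1 : k < 1)
    (x y z t : X)
    (hz : z ∈ ({x, y} : Set X) ∪ ((fun p => T^[p] x) '' {p : ℕ | 1 ≤ p ∧ p ≤ m}) ∪
        ((fun q => T^[q] y) '' {q : ℕ | 1 ≤ q ∧ q ≤ n}))
    (ht : t ∈ ({x, y} : Set X) ∪ ((fun p => T^[p] x) '' {p : ℕ | 1 ≤ p ∧ p ≤ m}) ∪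
        ((fun q => T^[q] y) '' {q : ℕ | 1 ≤ q ∧ q ≤ n}))
    (hzt : z ≠ t)
    (h : coneLE P (D (T^[m] x) (T^[n] y)) (k • D z t)) :
    eqMetric P D (T^[m] x) (T^[n] y) ≤ k * eqMetric P D z t := by
  obtain ⟨hclosed, ⟨e, he⟩, hne, hadd, hpos⟩ := hP
  have h0 : (0:E) ∈ P := by
    have := hadd 0 0 le_rfl le_rfl e he e he
    simpa using this
  set S1 := {r : ℝ | ∃ u : E, coneLE P (D (T^[m] x) (T^[n] y)) u ∧ ‖u‖ = r} with hS1
  set S2 := {r : ℝ | ∃ u : E, coneLE P (D z t) u ∧ ‖u‖ = r} with hS2def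
  have hS2ne : S2.Nonempty := ⟨‖D z t‖, D z t, by simpa [coneLE] using h0, rfl⟩
  have hbdd : BddBelow S1 := ⟨0, by rintro r ⟨u, _, rfl⟩; positivity⟩
  have key : ∀ r ∈ S2, sInf S1 ≤ k * r := by
    rintro r ⟨u, hu, rfl⟩
    have h2 : k • u - k • D z t ∈ P := by
      have := hadd k 0 hk0 le_rfl _ hu _ h0
      simpa [smul_sub] using this
    have h1 : coneLE P (D (T^[m] x) (T^[n] y)) (k • u) := by
      have h3 := hadd 1 1 zero_le_one zero_le_one _ h2 _ h
      rw [one_smul, one_smul] at h3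
      have heq : k • u - D (T^[m] x) (T^[n] y)
          = (k • u - k • D z t) + (k • D z t - D (T^[m] x) (T^[n] y)) := by abel
      show k • u - D (T^[m] x) (T^[n] y) ∈ P
      rw [heq]; exact h3
    have hmem : ‖k • u‖ ∈ S1 := ⟨k • u, h1, rfl⟩
    calc sInf S1 ≤ ‖k • u‖ := csInf_le hbdd hmem
    _ = k * ‖u‖ := by rw [norm_smul, Real.norm_of_nonneg hk0]
  have hsm : sInf S1 ≤ sInf (k • S2) := by
    apply le_csInf (hS2ne.smul_set)
    rintro b ⟨r, hr, rfl⟩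
    exact key r hr
  rw [Real.sInf_smul_of_nonneg hk0] at hsm
  simpa [eqMetric, hS1, hS2def] using hsm
end
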